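/- Suppose the single-sample loss c and the activation σ are C², and let θ*^r be an irreducible critical point of the width-r training loss L^r that is a strict saddle, i.e. there exists a direction β with βᵀ ∇²L^r(θ*^r) β < 0. Then every point θ*^m ∈ Θ̄_{r→m}(θ*^r) is also a strict saddle of L^m: the Hessian ∇²L^m(θ*^m) has at least one negative eigenvalue. -/

import Mathlib

/-- The parameter space of a width-`m` two-layer network: each neuron `i` carries an
incoming weight vector (the coordinates `(i, Sum.inl k)`) and an outgoing weight
vector (the coordinates `(i, Sum.inr o)`). -/
abbrev NNParam (din dout m : ℕ) := EuclideanSpace ℝ (Fin m × (Fin din ⊕ Fin dout))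

/-- The incoming weight vector of neuron `i`. -/
def wOf {din dout m : ℕ} (θ : NNParam din dout m) (i : Fin m) : Fin din → ℝ :=
  fun k => θ (i, Sum.inl k)

/-- The outgoing weight vector of neuron `i`. -/
def aOf {din dout m : ℕ} (θ : NNParam din dout m) (i : Fin m) : Fin dout → ℝ :=
  fun o => θ (i, Sum.inr o)

/-- The training loss `L^m(θ) = (1/N) ∑_{(x,y) ∈ Trn} c(f⁽²⁾(x|θ), y)` of the
two-layer network `f⁽²⁾(x|θ) = ∑ i, a_i σ(w_i · x)` of width `m`. -/
noncomputable def nnLoss {din dout : ℕ} (σ : ℝ → ℝ)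
    (c : (Fin dout → ℝ) → (Fin dout → ℝ) → ℝ)
    {N : ℕ} (x : Fin N → Fin din → ℝ) (y : Fin N → Fin dout → ℝ)
    (m : ℕ) (θ : NNParam din dout m) : ℝ :=
  (1 / N : ℝ) * ∑ n, c (fun o => ∑ i, aOf θ i o * σ (∑ k, wOf θ i k * x n k)) (y n)

/-- A point is irreducible if its incoming weight vectors are pairwise distinct
and no outgoing weight vector is zero. -/
def Irreducible' {din dout m : ℕ} (θ : NNParam din dout m) : Prop :=
  Function.Injective (wOf θ) ∧ ∀ i, aOf θ i ≠ 0

/-- Membership of a width-`m` point `θm` in the set of symmetry-induced critical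
points `Θ̄_{r→m}(θr)`, i.e. `⋃_{s, π ∈ S_m} P_π Γ̄_s(θr)`: there is a surjective
grouping map `g : Fin m → Fin r` (surjectivity encodes `k_t ≥ 1`) and coefficients
`β i` with, for each group `t`, `∑_{g i = t} β i = 1`, such that neuron `i` of `θm`
has incoming weight `w*_{g i}` and outgoing weight `β i • a*_{g i}`. -/
def InSymmetryInducedSet {din dout r m : ℕ}
    (θr : NNParam din dout r) (θm : NNParam din dout m) : Prop :=
  ∃ (g : Fin m → Fin r) (β : Fin m → ℝ),
    Function.Surjective g ∧
    (∀ i, wOf θm i = wOf θr (g i)) ∧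
    (∀ i, aOf θm i = β i • aOf θr (g i)) ∧
    (∀ t : Fin r, ∑ i ∈ Finset.univ.filter (fun i => g i = t), β i = 1)

/-!
The width-`m` point is the image of the width-`r` point under a linear "neuron-splitting" map
`T`, and `L^m ∘ T = L^r` because the coefficients of each split neuron sum to one. Since `T` is
linear, the Hessian of `L^m` at `T θ*^r` in the direction `T β` is the Hessian of `L^r` at
`θ*^r` in the direction `β`, so a negative curvature direction of `L^r` lifts to one of `L^m`.
-/

open InnerProductSpace RealInnerProductSpace

theorem Finset.sum_smul_comp_of_sum_fiber_eq_one {ι κ R M : Type*} [Fintype ι] [Fintype κ]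
    [DecidableEq κ] [Semiring R] [AddCommMonoid M] [Module R M] {g : ι → κ} {β : ι → R}
    (hβ : ∀ t, ∑ i with g i = t, β i = 1) (F : κ → M) :
    ∑ i, β i • F (g i) = ∑ t, F t :=
  calc ∑ i, β i • F (g i) = ∑ t, ∑ i with g i = t, β i • F (g i) := (sum_fiberwise _ _ _).symm
    _ = ∑ t, (∑ i with g i = t, β i) • F t := by
      refine sum_congr rfl fun t _ => ?_
      rw [sum_smul]
      exact sum_congr rfl fun i hi => by rw [(mem_filter.1 hi).2]
    _ = ∑ t, F t := by simp only [hβ, one_smul]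

section Hessian

variable {E F G : Type*}

theorem inner_fderiv_gradient_apply [NormedAddCommGroup E] [InnerProductSpace ℝ E]
    [CompleteSpace E] (f : E → ℝ) (x u v : E) :
    ⟪fderiv ℝ (gradient f) x u, v⟫ = fderiv ℝ (fderiv ℝ f) x u v := by
  have : gradient f = ((toDual ℝ E).symm.toContinuousLinearEquiv : StrongDual ℝ E ≃L[ℝ] E) ∘
      fderiv ℝ f := rfl
  rw [this, ContinuousLinearEquiv.comp_fderiv]
  exact toDual_symm_apply

theorem fderiv_fderiv_comp_continuousLinearMap [NormedAddCommGroup E] [NormedSpace ℝ E]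
    [NormedAddCommGroup F] [NormedSpace ℝ F] [NormedAddCommGroup G] [NormedSpace ℝ G]
    {f : F → G} (hf : ContDiff ℝ 2 f) (T : E →L[ℝ] F) (x u v : E) :
    fderiv ℝ (fderiv ℝ (f ∘ T)) x u v = fderiv ℝ (fderiv ℝ f) (T x) (T u) (T v) := by
  have h := iteratedFDeriv_two_apply (𝕜 := ℝ) (f ∘ T) x ![u, v]
  rw [T.iteratedFDeriv_comp_right hf x le_rfl] at h
  simpa [iteratedFDeriv_two_apply] using h.symm

end Hessian

section TwoLayer

variable {din dout r m : ℕ}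

theorem NNParam.ext {θ θ' : NNParam din dout m} (hw : ∀ i, wOf θ i = wOf θ' i)
    (ha : ∀ i, aOf θ i = aOf θ' i) : θ = θ' := by
  ext ⟨i, k | o⟩
  exacts [congrFun (hw i) k, congrFun (ha i) o]

/-- The output `f⁽²⁾(z | θ) = ∑ i, a_i σ(w_i · z)` of the network. -/
def network (σ : ℝ → ℝ) (θ : NNParam din dout m) (z : Fin din → ℝ) : Fin dout → ℝ :=
  fun o => ∑ i, aOf θ i o * σ (∑ k, wOf θ i k * z k)

theorem nnLoss_eq_sum_network (σ : ℝ → ℝ) (c : (Fin dout → ℝ) → (Fin dout → ℝ) → ℝ) {N : ℕ}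
    (x : Fin N → Fin din → ℝ) (y : Fin N → Fin dout → ℝ) (θ : NNParam din dout m) :
    nnLoss σ c x y m θ = (1 / N : ℝ) * ∑ n, c (network σ θ (x n)) (y n) := rfl

theorem nnLoss_contDiff {σ : ℝ → ℝ} (hσ : ContDiff ℝ 2 σ)
    {c : (Fin dout → ℝ) → (Fin dout → ℝ) → ℝ} (hc : ∀ yv, ContDiff ℝ 2 (fun v => c v yv))
    {N : ℕ} (x : Fin N → Fin din → ℝ) (y : Fin N → Fin dout → ℝ) (m : ℕ) :
    ContDiff ℝ 2 (nnLoss σ c x y m) := by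
  have hcoord : ∀ j, ContDiff ℝ 2 fun θ : NNParam din dout m => θ j :=
    fun j => (EuclideanSpace.proj (𝕜 := ℝ) j).contDiff
  refine contDiff_const.mul <| ContDiff.sum fun n _ => (hc (y n)).comp <| contDiff_pi.2 fun o =>
    ContDiff.sum fun i _ => (hcoord _).mul <| hσ.comp <| ContDiff.sum fun k _ => ?_
  exact (hcoord _).mul contDiff_const

noncomputable def splitNeurons (g : Fin m → Fin r) (β : Fin m → ℝ) :
    NNParam din dout r →L[ℝ] NNParam din dout m :=
  LinearMap.toContinuousLinearMap
    { toFun := fun θ => WithLp.toLp 2 fun p =>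
        Sum.elim (fun k => θ (g p.1, .inl k)) (fun o => β p.1 * θ (g p.1, .inr o)) p.2
      map_add' := fun θ θ' => by
        ext ⟨i, k | o⟩ <;> simp [mul_add]
      map_smul' := fun s θ => by
        ext ⟨i, k | o⟩ <;> simp [mul_left_comm] }

@[simp]
theorem wOf_splitNeurons (g : Fin m → Fin r) (β : Fin m → ℝ) (θ : NNParam din dout r) (i : Fin m) :
    wOf (splitNeurons g β θ) i = wOf θ (g i) := rfl

@[simp]
theorem aOf_splitNeurons (g : Fin m → Fin r) (β : Fin m → ℝ) (θ : NNParam din dout r) (i : Fin m) :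
    aOf (splitNeurons g β θ) i = β i • aOf θ (g i) := rfl

theorem InSymmetryInducedSet.exists_eq_splitNeurons {θr : NNParam din dout r}
    {θm : NNParam din dout m} (h : InSymmetryInducedSet θr θm) :
    ∃ (g : Fin m → Fin r) (β : Fin m → ℝ),
      (∀ t, ∑ i with g i = t, β i = 1) ∧ θm = splitNeurons g β θr := by
  obtain ⟨g, β, -, hw, ha, hβ⟩ := h
  exact ⟨g, β, hβ, NNParam.ext (by simpa using hw) (by simpa using ha)⟩

theorem network_splitNeurons {g : Fin m → Fin r} {β : Fin m → ℝ}
    (hβ : ∀ t, ∑ i with g i = t, β i = 1) (σ : ℝ → ℝ) (θ : NNParam din dout r) :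
    network σ (splitNeurons g β θ) = network σ θ := by
  funext z o
  simp only [network, wOf_splitNeurons, aOf_splitNeurons, Pi.smul_apply, smul_eq_mul, mul_assoc]
  exact Finset.sum_smul_comp_of_sum_fiber_eq_one hβ fun t => aOf θ t o * σ (∑ k, wOf θ t k * z k)

theorem nnLoss_comp_splitNeurons {g : Fin m → Fin r} {β : Fin m → ℝ}
    (hβ : ∀ t, ∑ i with g i = t, β i = 1) (σ : ℝ → ℝ)
    (c : (Fin dout → ℝ) → (Fin dout → ℝ) → ℝ) {N : ℕ} (x : Fin N → Fin din → ℝ)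
    (y : Fin N → Fin dout → ℝ) :
    nnLoss σ c x y m ∘ splitNeurons g β = nnLoss σ c x y r := by
  funext θ
  simp only [Function.comp_apply, nnLoss_eq_sum_network, network_splitNeurons hβ]

end TwoLayer

open RealInnerProductSpace in
theorem symmetryInduced_points_are_strict_saddles_general
    {din dout r m N : ℕ}
    (σ : ℝ → ℝ) (hσ : ContDiff ℝ 2 σ)
    (c : (Fin dout → ℝ) → (Fin dout → ℝ) → ℝ)
    (hcC2 : ∀ yv, ContDiff ℝ 2 (fun v => c v yv))
    (x : Fin N → Fin din → ℝ) (y : Fin N → Fin dout → ℝ)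
    (θr : NNParam din dout r)
    (hsaddle : ∃ β : NNParam din dout r,
      ⟪fderiv ℝ (gradient (nnLoss σ c x y r)) θr β, β⟫ < 0)
    (θm : NNParam din dout m)
    (hmem : InSymmetryInducedSet θr θm) :
    ∃ v : NNParam din dout m,
      ⟪fderiv ℝ (gradient (nnLoss σ c x y m)) θm v, v⟫ < 0 := by
  obtain ⟨g, β, hβ, rfl⟩ := hmem.exists_eq_splitNeurons
  obtain ⟨u, hu⟩ := hsaddle
  refine ⟨splitNeurons g β u, ?_⟩
  rwa [inner_fderiv_gradient_apply, ← fderiv_fderiv_comp_continuousLinearMap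
    (nnLoss_contDiff hσ hcC2 x y m), nnLoss_comp_splitNeurons hβ, ← inner_fderiv_gradient_apply]

open RealInnerProductSpace in
/-- Suppose `c` and `σ` are C² and `θr` is an irreducible critical
point of the width-`r` training loss that is a strict saddle, i.e. there is a
direction `β` with `βᵀ ∇²L^r(θr) β < 0` (where `∇²L(θ) = D(∇L)(θ)` is the Hessian).
Then every symmetry-induced critical point `θm ∈ Θ̄_{r→m}(θr)` is also a strict
saddle of `L^m`: its Hessian has at least one negative eigenvalue, i.e. there is a
direction `v` with `vᵀ ∇²L^m(θm) v < 0`. -/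
theorem symmetryInduced_points_are_strict_saddles
    {din dout r m N : ℕ} (hN : 0 < N)
    (σ : ℝ → ℝ) (hσ : ContDiff ℝ 2 σ)
    (c : (Fin dout → ℝ) → (Fin dout → ℝ) → ℝ)
    (hc0 : ∀ v yv, 0 ≤ c v yv)
    (hceq : ∀ v yv, c v yv = 0 ↔ v = yv)
    (hcC2 : ∀ yv, ContDiff ℝ 2 (fun v => c v yv))
    (x : Fin N → Fin din → ℝ) (y : Fin N → Fin dout → ℝ)
    (θr : NNParam din dout r)
    (hirr : Irreducible' θr)
    (hcrit : gradient (nnLoss σ c x y r) θr = 0)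
    (hsaddle : ∃ β : NNParam din dout r,
      ⟪fderiv ℝ (gradient (nnLoss σ c x y r)) θr β, β⟫ < 0)
    (θm : NNParam din dout m)
    (hmem : InSymmetryInducedSet θr θm) :
    ∃ v : NNParam din dout m,
      ⟪fderiv ℝ (gradient (nnLoss σ c x y m)) θm v, v⟫ < 0 :=
  symmetryInduced_points_are_strict_saddles_general σ hσ c hcC2 x y θr hsaddle θm hmem
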